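/- arXiv:2302.08874 — 7 statements merged into one kernel-verified Lean document; each statement's English description precedes it below -/
import Mathlib

section
/- Caristi's fixed point theorem: Let X be a nonempty complete metric space, let f : X → X be an arbitrary function, and let V : X → ℝ be a nonnegative lower semicontinuous function such that for all x ∈ X, dist(x, f(x)) ≤ V(x) − V(f(x)). Then f has a fixed point, i.e. there exists x* ∈ X with f(x*) = x*. -/
/-- Caristi's fixed point theorem: on a nonempty complete metric space, if
`V : X → ℝ` is nonnegative and lower semicontinuous and
`dist x (f x) ≤ V x - V (f x)` for all `x`, then the arbitrary function `f`
has a fixed point. -/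
theorem caristi_fixed_point {X : Type*} [MetricSpace X] [CompleteSpace X] [Nonempty X]
    (f : X → X) (V : X → ℝ)
    (hV0 : ∀ x, 0 ≤ V x) (hVlsc : LowerSemicontinuous V)
    (hCaristi : ∀ x, dist x (f x) ≤ V x - V (f x)) :
    ∃ x : X, f x = x := by
  classical
  set S : X → Set X := fun x => {z | dist x z ≤ V x - V z} with hS
  have hmem : ∀ x, x ∈ S x := by
    intro x; simp [hS]
  have hne : ∀ x, (V '' S x).Nonempty := fun x => ⟨V x, x, hmem x, rfl⟩
  have hbdd : ∀ x, BddBelow (V '' S x) := by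
    intro x; exact ⟨0, by rintro _ ⟨z, _, rfl⟩; exact hV0 z⟩
  -- transitivity of S
  have htrans : ∀ x y, y ∈ S x → S y ⊆ S x := by
    intro x y hy z hz
    have := dist_triangle x y z
    simp only [hS, Set.mem_setOf_eq] at *
    linarith
  have key : ∀ n (x : X), ∃ y, y ∈ S x ∧ V y < sInf (V '' S x) + (1/2)^n := by
    intro n x
    obtain ⟨a, ⟨y, hy, rfl⟩, ha⟩ := Real.lt_sInf_add_pos (hne x)
      (show (0:ℝ) < (1/2)^n by positivity)
    exact ⟨y, hy, ha⟩
  choose g hg1 hg2 using key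
  obtain ⟨x0⟩ : Nonempty X := inferInstance
  set u : ℕ → X := fun n => Nat.rec x0 (fun n xn => g n xn) n with hu
  have hstep : ∀ n, u (n+1) = g n (u n) := fun n => rfl
  have hmemS : ∀ n, u (n+1) ∈ S (u n) := fun n => hg1 n (u n)
  have hchain : ∀ m n, m ≤ n → u n ∈ S (u m) := by
    intro m n h
    induction n with
    | zero => simp_all [Nat.le_zero.mp h, hmem]
    | succ k ih =>
      rcases Nat.lt_or_ge m (k+1) with h' | h'
      · exact htrans _ _ (ih (Nat.lt_succ_iff.mp h')) (hmemS k)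
      · have : m = k + 1 := le_antisymm h h'
        subst this; exact hmem _
  have hanti : Antitone fun n => V (u n) := by
    apply antitone_nat_of_succ_le
    intro n
    have h1 := hmemS n
    have h2 := dist_nonneg (x := u n) (y := u (n+1))
    simp only [hS, Set.mem_setOf_eq] at h1
    linarith
  have hbddb : BddBelow (Set.range fun n => V (u n)) :=
    ⟨0, by rintro _ ⟨n, rfl⟩; exact hV0 _⟩
  set L : ℝ := ⨅ n, V (u n) with hL
  have hVtend : Filter.Tendsto (fun n => V (u n)) Filter.atTop (nhds L) :=
    tendsto_atTop_ciInf hanti hbddb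
  have hLle : ∀ n, L ≤ V (u n) := fun n => ciInf_le hbddb n
  -- Cauchy
  have hcauchy : CauchySeq u := by
    apply cauchySeq_of_le_tendsto_0 (fun n => V (u n) - L)
    · intro n m N hn hm
      rcases le_total n m with h | h
      · have := hchain n m h
        simp only [hS, Set.mem_setOf_eq] at this
        have h1 := hanti hn
        have h2 := hLle m
        linarith
      · have := hchain m n h
        simp only [hS, Set.mem_setOf_eq] at this
        have h1 := hanti hm
        have h2 := hLle n
        rw [dist_comm]
        linarith
    · have := hVtend.sub (tendsto_const_nhds (x := L))
      simpa using this
  obtain ⟨xs, hxs⟩ := cauchySeq_tendsto_of_complete hcauchy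
  -- V xs ≤ L by lsc
  have hVxs : V xs ≤ L := by
    by_contra h
    push_neg at h
    set y := (L + V xs) / 2 with hy
    have hyV : y < V xs := by rw [hy]; linarith
    have hLy : L < y := by rw [hy]; linarith
    have h1 : ∀ᶠ n in Filter.atTop, y < V (u n) := hxs.eventually (hVlsc xs y hyV)
    have h2 : ∀ᶠ n in Filter.atTop, V (u n) < y :=
      hVtend.eventually (Filter.Tendsto.eventually_lt_const hLy Filter.tendsto_id)
    obtain ⟨n, hn1, hn2⟩ := (h1.and h2).exists
    linarith
  -- xs ∈ S (u n) for all n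
  have hxsS : ∀ n, xs ∈ S (u n) := by
    intro n
    have hd : Filter.Tendsto (fun k => dist (u n) (u k)) Filter.atTop (nhds (dist (u n) xs)) :=
      (continuous_const.dist continuous_id).continuousAt.tendsto.comp hxs
    have hle : dist (u n) xs ≤ V (u n) - L := by
      apply le_of_tendsto_of_tendsto hd (tendsto_const_nhds.sub hVtend)
      filter_upwards [Filter.eventually_ge_atTop n] with k h
      have := hchain n k h
      simp only [hS, Set.mem_setOf_eq] at this
      have := hLle k
      linarith
    simp only [hS, Set.mem_setOf_eq]
    linarith
  -- f xs ∈ S (u n), so V (f xs) ≥ sInf ≥ V (u (n+1)) - (1/2)^n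
  have hfmem : ∀ n, f xs ∈ S (u n) := by
    intro n
    apply htrans _ _ (hxsS n)
    exact hCaristi xs
  have hVf : ∀ n, V (u (n+1)) - (1/2)^n ≤ V (f xs) := by
    intro n
    have h1 : sInf (V '' S (u n)) ≤ V (f xs) :=
      csInf_le (hbdd _) ⟨f xs, hfmem n, rfl⟩
    have h2 := hg2 n (u n)
    rw [← hstep n] at h2
    linarith
  have hLf : L ≤ V (f xs) := by
    have ht : Filter.Tendsto (fun n => V (u (n+1)) - (1/2:ℝ)^n) Filter.atTop (nhds (L - 0)) :=
      (hVtend.comp (Filter.tendsto_add_atTop_nat 1)).sub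
        (tendsto_pow_atTop_nhds_zero_of_lt_one (by norm_num) (by norm_num))
    have := le_of_tendsto ht (Filter.Eventually.of_forall hVf)
    simpa using this
  refine ⟨xs, ?_⟩
  have := hCaristi xs
  have hds : dist xs (f xs) ≤ 0 := by linarith
  have := le_antisymm hds dist_nonneg
  exact (dist_eq_zero.mp this).symm
end

section
/- Ekeland's variational principle (critical point form): Let X be a nonempty complete metric space and let V : X → ℝ be a nonnegative lower semicontinuous function. Then there exists x* ∈ X such that for all x ∈ X, if dist(x*, x) ≤ V(x*) − V(x) then x = x*. -/
/-- Ekeland's variational principle (critical point form): on a nonempty complete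
metric space, every nonnegative lower semicontinuous `V : X → ℝ` has a critical
point `x*`, i.e. `dist x* x ≤ V x* - V x` implies `x = x*`. -/
theorem ekeland_critical_point {X : Type*} [MetricSpace X] [CompleteSpace X] [Nonempty X]
    (V : X → ℝ) (hV0 : ∀ x, 0 ≤ V x) (hVlsc : LowerSemicontinuous V) :
    ∃ xs : X, ∀ x : X, dist xs x ≤ V xs - V x → x = xs := by
  classical
  set S : X → Set X := fun x => {y | dist x y + V y ≤ V x} with hS
  have hSelf : ∀ x, x ∈ S x := by intro x; simp [hS]
  have hTrans : ∀ {x y z}, y ∈ S x → z ∈ S y → z ∈ S x := by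
    intro x y z hy hz
    simp only [hS, Set.mem_setOf_eq] at *
    have := dist_triangle x y z
    linarith
  have hClosed : ∀ x, IsClosed (S x) := by
    intro x
    have hf : LowerSemicontinuous fun y => dist x y + V y :=
      ((continuous_const.dist continuous_id).lowerSemicontinuous).add hVlsc
    exact hf.isClosed_preimage (V x)
  have hBdd : ∀ x, BddBelow (V '' S x) := by
    intro x
    exact ⟨0, by rintro _ ⟨y, -, rfl⟩; exact hV0 y⟩
  have hNe : ∀ x, (V '' S x).Nonempty := fun x => ⟨V x, x, hSelf x, rfl⟩
  -- recursive construction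
  have hstep : ∀ n : ℕ, ∀ x : X, ∃ y, y ∈ S x ∧ V y < sInf (V '' S x) + (1/2) ^ n := by
    intro n x
    have hε : (0:ℝ) < (1/2) ^ n := by positivity
    have : sInf (V '' S x) < sInf (V '' S x) + (1/2) ^ n := by linarith
    obtain ⟨a, ⟨y, hy, rfl⟩, ha⟩ := exists_lt_of_csInf_lt (hNe x) this
    exact ⟨y, hy, ha⟩
  let u : ℕ → X := fun n => Nat.rec (Classical.arbitrary X)
    (fun n x => Classical.choose (hstep n x)) n
  have hu_succ : ∀ n, u (n+1) = Classical.choose (hstep n (u n)) := fun n => rfl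
  have hmem : ∀ n, u (n+1) ∈ S (u n) := fun n => (Classical.choose_spec (hstep n (u n))).1
  have hVlt : ∀ n, V (u (n+1)) < sInf (V '' S (u n)) + (1/2) ^ n := fun n =>
    (Classical.choose_spec (hstep n (u n))).2
  -- key inequality: y ∈ S (u (n+1)) → dist (u (n+1)) y ≤ (1/2)^n
  have hkey : ∀ n, ∀ y ∈ S (u (n+1)), dist (u (n+1)) y ≤ (1/2) ^ n := by
    intro n y hy
    have hyn : y ∈ S (u n) := hTrans (hmem n) hy
    have h1 : sInf (V '' S (u n)) ≤ V y := csInf_le (hBdd _) ⟨y, hyn, rfl⟩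
    have h2 : dist (u (n+1)) y + V y ≤ V (u (n+1)) := hy
    have := hVlt n
    linarith
  -- monotone chain: u m ∈ S (u n) for m ≥ n
  have hchain : ∀ n m, n ≤ m → u m ∈ S (u n) := by
    intro n m h
    obtain ⟨k, rfl⟩ := Nat.exists_eq_add_of_le h
    clear h
    induction k with
    | zero => exact hSelf _
    | succ k ih => exact hTrans ih (hmem (n+k))
  -- Cauchy
  have hcauchy : CauchySeq u := by
    apply cauchySeq_of_le_geometric (1/2) (2 * (V (u 0) + 2)) (by norm_num)
    intro n
    cases n with
    | zero =>
      have h := hmem 0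
      simp only [hS, Set.mem_setOf_eq] at h
      have h1 := hV0 (u (0+1))
      have h2 : (0:ℝ) ≤ dist (u 0) (u (0+1)) := dist_nonneg
      simp only [pow_zero, mul_one]
      linarith
    | succ n =>
      have h := hkey n (u (n+2)) (hmem (n+1))
      calc dist (u (n+1)) (u (n+2)) ≤ (1/2)^n := h
        _ ≤ 2 * (V (u 0) + 2) * (1/2)^(n+1) := by
            rw [pow_succ]
            have h1 : (0:ℝ) ≤ (1/2)^n := by positivity
            have h2 : (0:ℝ) ≤ V (u 0) := hV0 _
            nlinarith
  obtain ⟨xs, hxs⟩ := cauchySeq_tendsto_of_complete hcauchy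
  have hxsS : ∀ n, xs ∈ S (u n) := by
    intro n
    refine (hClosed (u n)).mem_of_tendsto hxs ?_
    filter_upwards [Filter.eventually_ge_atTop n] with m hm
    exact hchain n m hm
  refine ⟨xs, fun y hy => ?_⟩
  have hyS : y ∈ S xs := by
    simp only [hS, Set.mem_setOf_eq]; linarith
  have hdist : ∀ n : ℕ, dist xs y ≤ (1/2)^n + (1/2)^n := by
    intro n
    have h1 : dist (u (n+1)) xs ≤ (1/2)^n := hkey n xs (hxsS (n+1))
    have h2 : dist (u (n+1)) y ≤ (1/2)^n := hkey n y (hTrans (hxsS (n+1)) hyS)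
    calc dist xs y ≤ dist xs (u (n+1)) + dist (u (n+1)) y := dist_triangle _ _ _
      _ ≤ (1/2)^n + (1/2)^n := by rw [dist_comm]; linarith
  have h0 : dist xs y ≤ 0 := by
    have ht : Filter.Tendsto (fun n : ℕ => (1/2:ℝ)^n + (1/2)^n) Filter.atTop (nhds 0) := by
      have := tendsto_pow_atTop_nhds_zero_of_lt_one (by norm_num : (0:ℝ) ≤ 1/2) (by norm_num)
      simpa using this.add this
    exact ge_of_tendsto ht (Filter.Eventually.of_forall hdist)
  have : dist xs y = 0 := le_antisymm h0 dist_nonneg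
  exact (dist_eq_zero.mp this).symm
end

section
/- Priess-Crampe & Ribenboim fixed point theorem: Let X be a nonempty ultrametric space which is sequentially spherically complete, and let f : X → X be strictly contracting. Then f has a unique fixed point, i.e. there exists a unique x* ∈ X with f(x*) = x*. -/
/-!
The displacement `r x = dist x (f x)` does not increase on the ball `B x` of radius `r x`
around `x`, and these balls are nested: `y ∈ B x → B y ⊆ B x`. Choosing `x (n + 1) ∈ B (x n)`
with `r (x (n + 1))` within `1 / (n + 1)` of the infimum of `r` on `B (x n)`, spherical
completeness yields a point `w` in all of these balls, and `w` minimizes `r` on `B w`.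
Since `f w ∈ B w` and `r (f w) < r w` unless `f w = w`, the point `w` is fixed.
-/

open Metric Filter

def SequentiallySphericallyComplete (X : Type*) [PseudoMetricSpace X] : Prop :=
  ∀ (x : ℕ → X) (ρ : ℕ → ℝ), (∀ i, 0 ≤ ρ i) →
    (∀ i, max (dist (x i) (x (i + 1))) (ρ (i + 1)) ≤ ρ i) →
    (⋂ i : ℕ, closedBall (x i) (ρ i)).Nonempty

lemma exists_mem_forall_le_add {α : Type*} {s : Set α} {r : α → ℝ} (hs : s.Nonempty)
    (hr : BddBelow (r '' s)) {ε : ℝ} (hε : 0 < ε) : ∃ y ∈ s, ∀ z ∈ s, r y ≤ r z + ε := by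
  obtain ⟨_, ⟨y, hy, rfl⟩, hlt⟩ := Real.lt_sInf_add_pos (hs.image r) hε
  refine ⟨y, hy, fun z hz => hlt.le.trans ?_⟩
  gcongr
  exact csInf_le hr (Set.mem_image_of_mem r hz)

section Ultrametric

variable {X : Type*} [PseudoMetricSpace X] [IsUltrametricDist X]

lemma closedBall_subset_closedBall_of_mem {x y : X} {r s : ℝ} (hy : y ∈ closedBall x r)
    (hsr : s ≤ r) : closedBall y s ⊆ closedBall x r :=
  (closedBall_subset_closedBall hsr).trans (IsUltrametricDist.closedBall_eq_of_mem hy).ge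

theorem SequentiallySphericallyComplete.exists_isMinOn [Nonempty X]
    (hX : SequentiallySphericallyComplete X) {r : X → ℝ} (hr₀ : ∀ x, 0 ≤ r x)
    (hr : ∀ x, ∀ y ∈ closedBall x (r x), r y ≤ r x) :
    ∃ w, IsMinOn r (closedBall w (r w)) w := by
  have hbdd (x : X) : BddBelow (r '' closedBall x (r x)) :=
    ⟨0, by rintro _ ⟨y, -, rfl⟩; exact hr₀ y⟩
  choose g hg_mem hg_le using fun (n : ℕ) (x : X) =>
    exists_mem_forall_le_add (nonempty_closedBall.2 (hr₀ x)) (hbdd x)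
      (Nat.one_div_pos_of_nat (n := n))
  obtain ⟨x₀⟩ := ‹Nonempty X›
  let x : ℕ → X := fun n => Nat.rec x₀ (fun n xn => g n xn) n
  have hstep (n : ℕ) : x (n + 1) ∈ closedBall (x n) (r (x n)) := hg_mem n (x n)
  obtain ⟨w, hw⟩ := hX x (r ∘ x) (fun n => hr₀ _) fun n =>
    max_le (by rw [dist_comm]; exact hstep n) (hr _ _ (hstep n))
  rw [Set.mem_iInter] at hw
  refine ⟨w, fun y hy => ?_⟩
  have hy_mem (n : ℕ) : y ∈ closedBall (x n) (r (x n)) :=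
    closedBall_subset_closedBall_of_mem (hw n) (hr _ _ (hw n)) hy
  have hw_le (n : ℕ) : r w ≤ r y + 1 / ((n : ℝ) + 1) :=
    (hr _ _ (hw (n + 1))).trans (hg_le n (x n) y (hy_mem n))
  simpa using ge_of_tendsto' (tendsto_const_nhds.add tendsto_one_div_add_atTop_nhds_zero_nat) hw_le

variable {f : X → X}

lemma mapsTo_closedBall_dist_apply (hf : ∀ x y, dist (f x) (f y) ≤ dist x y) (x : X) :
    Set.MapsTo f (closedBall x (dist x (f x))) (closedBall x (dist x (f x))) := fun y hy =>
  calc dist (f y) x ≤ max (dist (f y) (f x)) (dist (f x) x) := dist_triangle_max _ _ _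
    _ ≤ dist x (f x) := max_le ((hf y x).trans hy) (dist_comm _ _).le

lemma dist_apply_le_of_mem_closedBall (hf : ∀ x y, dist (f x) (f y) ≤ dist x y) {x y : X}
    (hy : y ∈ closedBall x (dist x (f x))) : dist y (f y) ≤ dist x (f x) :=
  calc dist y (f y) ≤ max (dist y x) (dist x (f y)) := dist_triangle_max _ _ _
    _ ≤ dist x (f x) := max_le hy (by rw [dist_comm]; exact mapsTo_closedBall_dist_apply hf x hy)

end Ultrametric

/-- Priess-Crampe & Ribenboim fixed point theorem: a strictly contracting map on a
nonempty, sequentially spherically complete ultrametric space has a unique fixed point. -/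
theorem priess_crampe_ribenboim {X : Type*} [MetricSpace X] [Nonempty X]
    (hultra : ∀ x y z : X, dist x y ≤ max (dist x z) (dist z y))
    (hsph : ∀ (x : ℕ → X) (ρ : ℕ → ℝ), (∀ i, 0 ≤ ρ i) →
      (∀ i, max (dist (x i) (x (i + 1))) (ρ (i + 1)) ≤ ρ i) →
      (⋂ i : ℕ, Metric.closedBall (x i) (ρ i)).Nonempty)
    (f : X → X)
    (hf : ∀ x y : X, x ≠ y → dist (f x) (f y) < dist x y) :
    ∃! x : X, f x = x := by
  have : IsUltrametricDist X := ⟨fun x y z => hultra x z y⟩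
  have hf_le (x y : X) : dist (f x) (f y) ≤ dist x y := by
    rcases eq_or_ne x y with rfl | hne
    · simp
    · exact (hf x y hne).le
  obtain ⟨w, hw⟩ := SequentiallySphericallyComplete.exists_isMinOn hsph
    (r := fun x => dist x (f x)) (fun _ => dist_nonneg)
    fun _ _ => dist_apply_le_of_mem_closedBall hf_le
  have hfw : f w = w := by
    by_contra hne
    exact (hf w (f w) (Ne.symm hne)).not_ge
      (hw (mapsTo_closedBall_dist_apply hf_le w (mem_closedBall_self dist_nonneg)))
  exact ⟨w, hfw, fun y hy => by_contra fun hne => (hf y w hne).ne (by rw [hy, hfw])⟩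
end

section
/- Critical points of envelopes are critical points: Let X be a nonempty metric space, V : X → ℝ a nonnegative lower semicontinuous function, and α > 1 a real number. If x* ∈ X is a critical point of the α-envelope V_(α) (i.e. for all x ∈ X, dist(x*, x) ≤ V_(α)(x*) − V_(α)(x) implies x = x*), then x* is also a critical point of V (i.e. for all x ∈ X, dist(x*, x) ≤ V(x*) − V(x) implies x = x*), and moreover V_(α)(x*) = V(x*). -/
/-- The `α`-envelope of `V`: `V_(α)(x) = inf_{y ∈ X} (V y + α * dist x y)`. -/
noncomputable def envelope {X : Type*} [MetricSpace X] (V : X → ℝ) (α : ℝ) (x : X) : ℝ :=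
  ⨅ y : X, (V y + α * dist x y)

/-- Critical points of envelopes are critical points: if `α > 1` and `x*` is a
critical point of `V_(α)`, then `x*` is a critical point of `V` and
`V_(α)(x*) = V(x*)`. -/
theorem envelope_critical_point {X : Type*} [MetricSpace X] [Nonempty X]
    (V : X → ℝ) (hV0 : ∀ x, 0 ≤ V x) (hVlsc : LowerSemicontinuous V)
    (α : ℝ) (hα : 1 < α) (xs : X)
    (hcrit : ∀ x : X, dist xs x ≤ envelope V α xs - envelope V α x → x = xs) :
    (∀ x : X, dist xs x ≤ V xs - V x → x = xs) ∧ envelope V α xs = V xs := by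
  have hαpos : 0 < α := by linarith
  have hbdd : ∀ x : X, BddBelow (Set.range fun y => V y + α * dist x y) := by
    intro x
    refine ⟨0, ?_⟩
    rintro _ ⟨y, rfl⟩
    have := hV0 y
    have := dist_nonneg (x := x) (y := y)
    positivity
  have hle : ∀ x y : X, envelope V α x ≤ V y + α * dist x y :=
    fun x y => ciInf_le (hbdd x) y
  have henvle : ∀ x : X, envelope V α x ≤ V x := by
    intro x
    have := hle x x
    simpa using this
  have hmain : envelope V α xs = V xs := by
    by_contra hne
    have hlt : envelope V α xs < V xs := lt_of_le_of_ne (henvle xs) hne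
    set c := V xs - envelope V α xs with hc
    have hcpos : 0 < c := by simp only [hc]; linarith
    have hlsc := hVlsc xs (envelope V α xs + c / 2) (by simp only [hc]; linarith)
    rw [Metric.eventually_nhds_iff] at hlsc
    obtain ⟨r, hrpos, hball⟩ := hlsc
    set ε := min (c / 2) ((α - 1) * r) with hε
    have hεpos : 0 < ε := lt_min (by linarith) (by nlinarith)
    have hενc : ε ≤ c / 2 := min_le_left _ _
    have hεr : ε ≤ (α - 1) * r := min_le_right _ _
    have hlt2 : envelope V α xs < envelope V α xs + ε := by linarith
    obtain ⟨y, hy⟩ := exists_lt_of_ciInf_lt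
      (show (⨅ y : X, (V y + α * dist xs y)) < envelope V α xs + ε from hlt2)
    -- V y < envelope + ε ≤ envelope + c/2, so y is outside the ball: r ≤ dist y xs
    have hVy : V y < envelope V α xs + c / 2 := by
      have := dist_nonneg (x := xs) (y := y)
      nlinarith
    have hrd : r ≤ dist y xs := by
      by_contra h
      push_neg at h
      exact absurd hVy (not_lt.mpr (le_of_lt (hball h)))
    have hdist : dist xs y = dist y xs := dist_comm xs y
    have hεd : ε ≤ (α - 1) * dist xs y := by
      rw [hdist]
      nlinarith
    have hkey : dist xs y ≤ envelope V α xs - envelope V α y := by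
      have h1 : envelope V α y ≤ V y := henvle y
      nlinarith
    have := hcrit y hkey
    rw [this] at hrd
    simp at hrd
    linarith
  refine ⟨?_, hmain⟩
  intro x hx
  apply hcrit
  have := henvle x
  linarith [hmain]
end

section
/- Caristi's fixed point theorem for continuous self-maps with arbitrary potential: Let X be a nonempty complete metric space, let f : X → X be continuous, and let V : X → ℝ be any nonnegative function (not assumed continuous or lower semicontinuous) such that for all x ∈ X, dist(x, f(x)) ≤ V(x) − V(f(x)). Then f has a fixed point: there exists x* ∈ X with f(x*) = x*. -/
/-- Caristi's fixed point theorem for continuous self-maps with an arbitrary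
nonnegative potential: if `f : X → X` is continuous on a nonempty complete metric
space and `V : X → ℝ` is nonnegative with `dist x (f x) ≤ V x - V (f x)` for all
`x`, then `f` has a fixed point. -/
theorem caristi_continuous_fixed_point {X : Type*} [MetricSpace X] [CompleteSpace X]
    [Nonempty X] (f : X → X) (hf : Continuous f) (V : X → ℝ)
    (hV0 : ∀ x, 0 ≤ V x)
    (hCaristi : ∀ x, dist x (f x) ≤ V x - V (f x)) :
    ∃ x : X, f x = x := by
  obtain ⟨x0⟩ := ‹Nonempty X›
  set u : ℕ → X := fun n => f^[n] x0 with hu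
  have hstep : ∀ n, u (n + 1) = f (u n) := by
    intro n; simp [hu, Function.iterate_succ_apply']
  have key : ∀ n m, n ≤ m → dist (u n) (u m) ≤ V (u n) - V (u m) := by
    intro n m hnm
    induction m with
    | zero => simp [Nat.le_zero.mp hnm]
    | succ m ih =>
      rcases Nat.lt_or_ge n (m + 1) with h | h
      · have hnm' : n ≤ m := Nat.lt_succ_iff.mp h
        calc dist (u n) (u (m + 1)) ≤ dist (u n) (u m) + dist (u m) (u (m + 1)) :=
              dist_triangle _ _ _
          _ ≤ (V (u n) - V (u m)) + (V (u m) - V (u (m + 1))) := by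
              have := hCaristi (u m)
              rw [hstep]
              exact add_le_add (ih hnm') this
          _ = V (u n) - V (u (m + 1)) := by ring
      · have : n = m + 1 := le_antisymm hnm h
        simp [this]
  have hanti : Antitone fun n => V (u n) := by
    apply antitone_nat_of_succ_le
    intro n
    have h1 := hCaristi (u n)
    have h2 : (0:ℝ) ≤ dist (u n) (f (u n)) := dist_nonneg
    rw [hstep]; linarith
  have hbdd : BddBelow (Set.range fun n => V (u n)) :=
    ⟨0, by rintro y ⟨n, rfl⟩; exact hV0 _⟩
  have hconv : ∃ l, Filter.Tendsto (fun n => V (u n)) Filter.atTop (nhds l) :=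
    ⟨_, tendsto_atTop_ciInf hanti hbdd⟩
  obtain ⟨l, hl⟩ := hconv
  have hVc : CauchySeq fun n => V (u n) := hl.cauchySeq
  have hc : CauchySeq u := by
    rw [Metric.cauchySeq_iff'] at hVc ⊢
    intro ε hε
    obtain ⟨N, hN⟩ := hVc ε hε
    refine ⟨N, fun n hn => ?_⟩
    have := hN n hn
    have hd := key N n hn
    rw [Real.dist_eq] at this
    rw [dist_comm]
    calc dist (u N) (u n) ≤ V (u N) - V (u n) := hd
      _ ≤ |V (u n) - V (u N)| := by rw [abs_sub_comm]; exact le_abs_self _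
      _ < ε := this
  obtain ⟨x, hx⟩ := cauchySeq_tendsto_of_complete hc
  refine ⟨x, ?_⟩
  have h1 : Filter.Tendsto (fun n => u (n + 1)) Filter.atTop (nhds x) :=
    hx.comp (Filter.tendsto_add_atTop_nat 1)
  have h2 : Filter.Tendsto (fun n => f (u n)) Filter.atTop (nhds (f x)) :=
    (hf.tendsto x).comp hx
  have : f x = x := by
    refine tendsto_nhds_unique ?_ h1
    simpa only [hstep] using h2
  exact this
end

section
/- Caristi orbits are Cauchy: Let X be a metric space, f : X → X, and V : X → ℝ a nonnegative function such that dist(x, f(x)) ≤ V(x) − V(f(x)) for all x ∈ X. Then for every x₀ ∈ X, the orbit sequence n ↦ f^[n](x₀) is a Cauchy sequence. -/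
/-- Caristi orbits are Cauchy: if `V` is nonnegative and
`dist x (f x) ≤ V x - V (f x)` for all `x`, then every orbit `n ↦ f^[n] x₀`
is a Cauchy sequence. -/
theorem caristi_orbit_cauchySeq {X : Type*} [MetricSpace X]
    (f : X → X) (V : X → ℝ) (hV0 : ∀ x, 0 ≤ V x)
    (hCaristi : ∀ x, dist x (f x) ≤ V x - V (f x))
    (x₀ : X) :
    CauchySeq (fun n : ℕ => f^[n] x₀) := by
  set u : ℕ → X := fun n => f^[n] x₀ with hu
  set d : ℕ → ℝ := fun n => V (u n) - V (u (n + 1)) with hd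
  have hstep : ∀ n, dist (u n) (u (n + 1)) ≤ d n := by
    intro n
    have : u (n + 1) = f (u n) := by
      simp [hu, Function.iterate_succ_apply']
    simp only [hd, this]
    exact hCaristi (u n)
  have hdnn : ∀ n, 0 ≤ d n := fun n => le_trans dist_nonneg (hstep n)
  have hsum : Summable d := by
    apply summable_of_sum_range_le hdnn (c := V (u 0))
    intro n
    have : ∑ i ∈ Finset.range n, d i = V (u 0) - V (u n) := by
      induction n with
      | zero => simp
      | succ n ih => rw [Finset.sum_range_succ, ih]; ring
    rw [this]
    linarith [hV0 (u n)]
  exact cauchySeq_of_dist_le_of_summable d hstep hsum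
end

section
/- Ball-nesting inequality for strictly contracting maps on ultrametric spaces: Let X be an ultrametric space and f : X → X strictly contracting. Then for all x, y ∈ X, dist(x, y) ≤ max(dist(x, f(x)), dist(y, f(y))). In particular, if dist(y, f(y)) ≤ dist(x, f(x)) then dist(x, y) ≤ dist(x, f(x)), so the closed ball of radius dist(y, f(y)) around y is contained (in the strong sense) in the closed ball of radius dist(x, f(x)) around x. -/
/-- Ball-nesting inequality for strictly contracting maps on ultrametric spaces:
`dist x y ≤ max (dist x (f x)) (dist y (f y))`; in particular, if
`dist y (f y) ≤ dist x (f x)` then `dist x y ≤ dist x (f x)`. -/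
theorem ultrametric_ball_nesting {X : Type*} [MetricSpace X]
    (hultra : ∀ x y z : X, dist x y ≤ max (dist x z) (dist z y))
    (f : X → X)
    (hf : ∀ x y : X, x ≠ y → dist (f x) (f y) < dist x y) :
    ∀ x y : X, dist x y ≤ max (dist x (f x)) (dist y (f y)) ∧
      (dist y (f y) ≤ dist x (f x) → dist x y ≤ dist x (f x)) := by
  intro x y
  have key : dist x y ≤ max (dist x (f x)) (dist y (f y)) := by
    by_cases hxy : x = y
    · subst hxy; simp [dist_nonneg]
    · by_contra h
      push_neg at h
      have h1 : dist x y ≤ max (dist x (f x)) (dist (f x) y) := hultra x y (f x)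
      have h2 : dist (f x) y ≤ max (dist (f x) (f y)) (dist (f y) y) :=
        hultra (f x) y (f y)
      have hc : dist (f x) (f y) < dist x y := hf x y hxy
      have hyy : dist (f y) y = dist y (f y) := dist_comm _ _
      have := le_trans h1 (max_le_max le_rfl h2)
      rw [hyy] at this
      have hA : dist x (f x) < dist x y := lt_of_le_of_lt (le_max_left _ _) h
      have hB : dist y (f y) < dist x y := lt_of_le_of_lt (le_max_right _ _) h
      have : dist x y < dist x y :=
        lt_of_le_of_lt this (by
          apply max_lt hA (max_lt hc hB))
      exact lt_irrefl _ this
  exact ⟨key, fun hle => le_trans key (by rw [max_eq_left hle])⟩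
end
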